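/- arXiv:1504.00407 — 3 statements merged into one kernel-verified Lean document; each statement's English description precedes it below -/
import Mathlib

section
/- For any word w over S, one has wS = (ww⁻¹)S, where ww⁻¹ is the concatenation of w with its reversed-inverted word w⁻¹. -/
/-- The action of a word over `S` (a list of pairs `(p, ε)` with `p ∈ S` and
`ε ∈ {+1, −1}` encoded as a `Bool`) on subsets of `S`:
`p^{+1} X = {p x : x ∈ X}` and `p^{−1} X = {q ∈ S : p q ∈ X}`. -/
def wordAct {G : Type*} [Group G] (S : Set G) : List (G × Bool) → Set G → Set G
  | [], X => X
  | l :: w, X =>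
    if l.2 then (fun x => l.1 * x) '' wordAct S w X
    else {q | q ∈ S ∧ l.1 * q ∈ wordAct S w X}

/-- The reversed-inverted word `w⁻¹ = (pₙ^{−εₙ}, …, p₁^{−ε₁})`. -/
def wordInv {G : Type*} (w : List (G × Bool)) : List (G × Bool) :=
  (w.map fun l => (l.1, !l.2)).reverse

private lemma wordAct_append {G : Type*} [Group G] (S : Set G)
    (u v : List (G × Bool)) (X : Set G) :
    wordAct S (u ++ v) X = wordAct S u (wordAct S v X) := by
  induction u with
  | nil => rfl
  | cons l u ih => by_cases h : l.2 <;> simp [wordAct, ih, h]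

private lemma wordAct_subset {G : Type*} [Group G] (S : Submonoid G)
    (w : List (G × Bool)) (hw : ∀ l ∈ w, l.1 ∈ S) (X : Set G) (hX : X ⊆ S) :
    wordAct (S : Set G) w X ⊆ S := by
  induction w with
  | nil => exact hX
  | cons l w ih =>
    have hl : l.1 ∈ S := hw l (List.mem_cons_self ..)
    have ih' : wordAct (S : Set G) w X ⊆ S :=
      ih fun l' hl' => hw l' (List.mem_cons_of_mem _ hl')
    by_cases h : l.2
    · simp only [wordAct, h, if_true]
      rintro _ ⟨x, hx, rfl⟩
      exact S.mul_mem hl (ih' hx)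
    · simp only [wordAct, h, if_false]
      rintro q ⟨hq, _⟩
      exact hq

private lemma wordInv_cons {G : Type*} (l : G × Bool) (w : List (G × Bool)) :
    wordInv (l :: w) = wordInv w ++ [(l.1, !l.2)] := by
  simp [wordInv]

private lemma word_key {G : Type*} [Group G] (S : Submonoid G) :
    ∀ (w : List (G × Bool)), (∀ l ∈ w, l.1 ∈ S) → ∀ X ⊆ (S : Set G),
      wordAct (S : Set G) w (wordAct (S : Set G) (wordInv w) X)
        = X ∩ wordAct (S : Set G) w (S : Set G) := by
  intro w
  induction w with
  | nil =>
    intro _ X hX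
    simpa [wordAct, wordInv] using (Set.inter_eq_left.mpr hX).symm
  | cons l w ih =>
    intro hw X hX
    have hl : l.1 ∈ S := hw l (List.mem_cons_self ..)
    have hw' : ∀ l' ∈ w, l'.1 ∈ S := fun l' hl' => hw l' (List.mem_cons_of_mem _ hl')
    -- the set X' = linv X
    set X' : Set G := wordAct (S : Set G) [(l.1, !l.2)] X with hX'def
    have hX' : X' ⊆ (S : Set G) := by
      rw [hX'def]
      by_cases h : l.2
      · simp only [wordAct, h, Bool.not_true, if_false]
        rintro q ⟨hq, _⟩
        exact hq
      · simp only [wordAct, h, Bool.not_false, if_true]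
        rintro _ ⟨x, hx, rfl⟩
        exact S.mul_mem hl (hX hx)
    have hwS : wordAct (S : Set G) w (S : Set G) ⊆ S :=
      wordAct_subset S w hw' _ subset_rfl
    have inner : wordAct (S : Set G) (wordInv (l :: w)) X
        = wordAct (S : Set G) (wordInv w) X' := by
      rw [wordInv_cons, wordAct_append]
    rw [inner]
    have hmid := ih hw' X' hX'
    by_cases h : l.2
    · simp only [wordAct, h, if_true, hmid]
      have hX'' : X' = {q | q ∈ (S : Set G) ∧ l.1 * q ∈ X} := by
        rw [hX'def]; simp [wordAct, h]
      rw [hX'']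
      ext y
      constructor
      · rintro ⟨z, ⟨⟨hzS, hpz⟩, hzw⟩, rfl⟩
        exact ⟨hpz, z, hzw, rfl⟩
      · rintro ⟨hyX, z, hzw, rfl⟩
        exact ⟨z, ⟨⟨hwS hzw, hyX⟩, hzw⟩, rfl⟩
    · simp only [wordAct, h, if_false, hmid]
      have hX'' : X' = (fun x => l.1 * x) '' X := by
        rw [hX'def]; simp [wordAct, h]
      rw [hX'']
      ext q
      constructor
      · rintro ⟨hqS, ⟨x, hx, hxe⟩, hqw⟩
        have : q = x := mul_left_cancel hxe.symm
        exact ⟨this ▸ hx, hqS, hqw⟩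
      · rintro ⟨hqX, hqS, hqw⟩
        exact ⟨hqS, ⟨q, hqX, rfl⟩, hqw⟩

/-- For any word `w` over `S`, one has `wS = (ww⁻¹)S`, where `ww⁻¹` is the
concatenation of `w` with its reversed-inverted word `w⁻¹`. -/
theorem word_mul_inv_act {G : Type*} [Group G] (S : Submonoid G)
    (w : List (G × Bool)) (hw : ∀ l ∈ w, l.1 ∈ S) :
    wordAct (S : Set G) w (S : Set G) =
      wordAct (S : Set G) (w ++ wordInv w) (S : Set G) := by
  rw [wordAct_append, word_key S w hw (S : Set G) subset_rfl,
    Set.inter_eq_right.mpr (wordAct_subset S w hw _ subset_rfl)]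
end

section
/- Let G be a locally compact group, S ⊆ G a closed subsemigroup containing the identity with S⁻¹S = G and with nonempty interior. Then for every compact set K ⊆ S × S there exists d ∈ S such that da⁻¹b ∈ S for every (a, b) ∈ K. -/
/-!
If `u ∈ interior S` and `g = s⁻¹ t` with `s, t ∈ S`, then `(u s) g = u t` lies in the open set
`interior S * t ⊆ S`, so every point of `G` has a neighbourhood moved into `S` by a single element
of `S`. The condition `S⁻¹ S = G` is also a left Ore condition (`s x = t y` is solvable in `S`
for all `x, y`), so two such elements have a common left multiple in `S`, which moves the union of
the two neighbourhoods into `S`. Compactness of `{a⁻¹ b | (a, b) ∈ K}` finishes the proof.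
-/

namespace Submonoid

variable {G : Type*} [Group G] (S : Submonoid G)

theorem exists_mul_eq_mul_of_forall_eq_inv_mul
    (hSG : ∀ g : G, ∃ s ∈ S, ∃ t ∈ S, g = s⁻¹ * t) (x y : G) :
    ∃ s ∈ S, ∃ t ∈ S, s * x = t * y := by
  obtain ⟨s, hs, t, ht, hst⟩ := hSG (x * y⁻¹)
  refine ⟨s, hs, t, ht, ?_⟩
  calc s * x = s * (x * y⁻¹) * y := by group
    _ = t * y := by rw [hst, mul_inv_cancel_left]

theorem exists_forall_mul_mem_union (hSG : ∀ g : G, ∃ s ∈ S, ∃ t ∈ S, g = s⁻¹ * t)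
    {A B : Set G} (hA : ∃ d ∈ S, ∀ x ∈ A, d * x ∈ S)
    (hB : ∃ d ∈ S, ∀ x ∈ B, d * x ∈ S) :
    ∃ d ∈ S, ∀ x ∈ A ∪ B, d * x ∈ S := by
  obtain ⟨d₁, hd₁, hA⟩ := hA
  obtain ⟨d₂, hd₂, hB⟩ := hB
  obtain ⟨s, hs, t, ht, hst⟩ := S.exists_mul_eq_mul_of_forall_eq_inv_mul hSG d₁ d₂
  refine ⟨s * d₁, S.mul_mem hs hd₁, ?_⟩
  rintro x (hx | hx)
  · simpa only [mul_assoc] using S.mul_mem hs (hA x hx)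
  · simpa only [hst, mul_assoc] using S.mul_mem ht (hB x hx)

variable [TopologicalSpace G] [ContinuousMul G]

theorem mul_mem_interior {x y : G} (hx : x ∈ interior (S : Set G)) (hy : y ∈ S) :
    x * y ∈ interior (S : Set G) := by
  simpa only [coe_mul_coe] using subset_interior_mul_left (Set.mul_mem_mul hx hy)

theorem exists_mul_mem_interior (hSG : ∀ g : G, ∃ s ∈ S, ∃ t ∈ S, g = s⁻¹ * t)
    (hint : (interior (S : Set G)).Nonempty) (g : G) :
    ∃ d ∈ S, d * g ∈ interior (S : Set G) := by
  obtain ⟨u, hu⟩ := hint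
  obtain ⟨s, hs, t, ht, rfl⟩ := hSG g
  refine ⟨u * s, S.mul_mem (interior_subset hu) hs, ?_⟩
  simpa only [mul_assoc, mul_inv_cancel_left] using S.mul_mem_interior hu ht

theorem exists_forall_mul_mem_of_isCompact
    (hSG : ∀ g : G, ∃ s ∈ S, ∃ t ∈ S, g = s⁻¹ * t)
    (hint : (interior (S : Set G)).Nonempty) {C : Set G} (hC : IsCompact C) :
    ∃ d ∈ S, ∀ x ∈ C, d * x ∈ S := by
  refine hC.induction_on ⟨1, S.one_mem, by simp⟩ ?_
    (fun _ _ => S.exists_forall_mul_mem_union hSG) ?_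
  · rintro A B hAB ⟨d, hd, hB⟩
    exact ⟨d, hd, fun x hx => hB x (hAB hx)⟩
  · intro g _
    obtain ⟨d, hd, hdg⟩ := S.exists_mul_mem_interior hSG hint g
    have hopen : IsOpen {x | d * x ∈ interior (S : Set G)} :=
      isOpen_interior.preimage (continuous_const_mul d)
    exact ⟨_, mem_nhdsWithin_of_mem_nhds (hopen.mem_nhds hdg),
      d, hd, fun x hx => interior_subset hx⟩

end Submonoid

theorem exists_d_compact_subset_general {G : Type*} [Group G] [TopologicalSpace G]
    [IsTopologicalGroup G]
    (S : Submonoid G)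
    (hSG : ∀ g : G, ∃ s ∈ S, ∃ t ∈ S, g = s⁻¹ * t)
    (hint : (interior (S : Set G)).Nonempty)
    (K : Set (G × G)) (hK : IsCompact K) :
    ∃ d ∈ S, ∀ a b : G, (a, b) ∈ K → d * a⁻¹ * b ∈ S := by
  have hC : IsCompact ((fun p : G × G => p.1⁻¹ * p.2) '' K) :=
    hK.image (by fun_prop)
  obtain ⟨d, hd, hdC⟩ := S.exists_forall_mul_mem_of_isCompact hSG hint hC
  exact ⟨d, hd, fun a b hab => mul_assoc d a⁻¹ b ▸ hdC _ ⟨(a, b), hab, rfl⟩⟩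

/-- Let `G` be a locally compact group, `S ⊆ G` a closed subsemigroup
containing the identity with `S⁻¹S = G` and with nonempty interior.  Then for
every compact set `K ⊆ S × S` there exists `d ∈ S` such that `da⁻¹b ∈ S` for
every `(a, b) ∈ K`. -/
theorem exists_d_compact_subset {G : Type*} [Group G] [TopologicalSpace G]
    [IsTopologicalGroup G] [LocallyCompactSpace G]
    (S : Submonoid G) (hS : IsClosed (S : Set G))
    (hSG : ∀ g : G, ∃ s ∈ S, ∃ t ∈ S, g = s⁻¹ * t)
    (hint : (interior (S : Set G)).Nonempty)
    (K : Set (G × G)) (hK : IsCompact K) (hKS : K ⊆ (S : Set G) ×ˢ (S : Set G)) :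
    ∃ d ∈ S, ∀ a b : G, (a, b) ∈ K → d * a⁻¹ * b ∈ S :=
  exists_d_compact_subset_general S hSG hint K hK
end

section
/- Let G be a locally compact group with left Haar measure μ, and S ⊆ G a closed subsemigroup containing the identity with S⁻¹S = G and with nonempty interior. For d ∈ S let S_d = {(a, b) ∈ S × S : da⁻¹b ∈ S}. Then the set of ξ ∈ L²(G × G, μ ⊗ μ) that vanish a.e. outside S_d for some d ∈ S is dense in the closed subspace of all ξ ∈ L²(G × G, μ ⊗ μ) vanishing a.e. outside S × S. -/
/-!
For `d ∈ S` put `V_d = {a | d a⁻¹ ∈ int S}`. These sets are open, and `S⁻¹S = G` makes them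
cover `G` and form a directed family: any `d₁, d₂ ∈ S` have a common left multiple
`s₁ d₁ = s₂ d₂` in `S`, and `V_d ⊆ V_{sd}` for `s ∈ S`. Since `d a⁻¹ b ∈ S` for `a ∈ V_d` and
`b ∈ S`, the function `ξ · 1_{V_d × G}` vanishes outside `S_d` when `ξ` vanishes outside `S × S`.
By inner regularity of `μ`, the mass of `|ξ|²` is tight in the first coordinate, and a compact set
lies in a single `V_d`, so these truncations approximate `ξ` in `L²`.
-/

open MeasureTheory Set
open scoped ENNReal Pointwise

namespace MeasureTheory

variable {α : Type*} [TopologicalSpace α] [MeasurableSpace α] [BorelSpace α] [R1Space α]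
  {μ : Measure α} [μ.InnerRegularCompactLTTop]

theorem exists_isCompact_isClosed_setLIntegral_compl_lt {f : α → ℝ≥0∞}
    (hf : ∫⁻ x, f x ∂μ ≠ ∞) {ε : ℝ≥0∞} (hε : ε ≠ 0) :
    ∃ K, IsCompact K ∧ IsClosed K ∧ ∫⁻ x in Kᶜ, f x ∂μ < ε := by
  have hε₂ : ε / 2 ≠ 0 := (ENNReal.half_pos hε).ne'
  obtain ⟨s, hs, hμs, hsf⟩ := exists_setLIntegral_compl_lt hf hε₂
  obtain ⟨δ, hδ, hδf⟩ := exists_pos_setLIntegral_lt_of_measure_lt hf hε₂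
  obtain ⟨K, -, hK, hKc, hsK⟩ := hs.exists_isCompact_isClosed_sdiff_lt hμs.ne hδ.ne'
  have hKs : Kᶜ ⊆ sᶜ ∪ s \ K := fun x hx =>
    (em (x ∈ s)).elim (fun h => .inr ⟨h, hx⟩) .inl
  refine ⟨K, hK, hKc, ?_⟩
  calc ∫⁻ x in Kᶜ, f x ∂μ ≤ ∫⁻ x in sᶜ ∪ s \ K, f x ∂μ := lintegral_mono_set hKs
    _ ≤ ∫⁻ x in sᶜ, f x ∂μ + ∫⁻ x in s \ K, f x ∂μ := lintegral_union_le _ _ _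
    _ < ε / 2 + ε / 2 := ENNReal.add_lt_add hsf (hδf _ hsK)
    _ = ε := ENNReal.add_halves ε

variable [SFinite μ] {β E : Type*} [MeasurableSpace β] [NormedAddCommGroup E]
  {ν : Measure β} [SFinite ν] {p : ℝ≥0∞} {f : α × β → E}

theorem MemLp.exists_isCompact_eLpNorm_indicator_compl_prod_lt (hp₀ : p ≠ 0) (hp : p ≠ ∞)
    (hf : MemLp f p (μ.prod ν)) {ε : ℝ≥0∞} (hε : ε ≠ 0) :
    ∃ K, IsCompact K ∧ eLpNorm ((Kᶜ ×ˢ univ).indicator f) p (μ.prod ν) < ε := by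
  set F : α × β → ℝ≥0∞ := fun x => ‖f x‖ₑ ^ p.toReal
  have hF : AEMeasurable F (μ.prod ν) := hf.aestronglyMeasurable.enorm.pow_const _
  have hp' : 0 < p.toReal := ENNReal.toReal_pos hp₀ hp
  have hFint : ∫⁻ a, ∫⁻ b, F (a, b) ∂ν ∂μ ≠ ∞ := by
    rw [← lintegral_prod _ hF]
    exact (lintegral_rpow_enorm_lt_top_of_eLpNorm_lt_top hp₀ hp hf.eLpNorm_lt_top).ne
  obtain ⟨K, hK, hKc, hKF⟩ := exists_isCompact_isClosed_setLIntegral_compl_lt hFint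
    (ε := ε ^ p.toReal) (by simp [ENNReal.rpow_eq_zero_iff, hε, hp'.not_gt])
  have hKm : MeasurableSet (Kᶜ ×ˢ univ : Set (α × β)) := hKc.measurableSet.compl.prod .univ
  have hF_restrict :
      ∫⁻ x in Kᶜ ×ˢ univ, F x ∂(μ.prod ν) = ∫⁻ a in Kᶜ, ∫⁻ b, F (a, b) ∂ν ∂μ := by
    have hF' := hF.restrict (s := Kᶜ ×ˢ univ)
    rw [← Measure.prod_restrict, Measure.restrict_univ] at hF' ⊢
    exact lintegral_prod _ hF'
  refine ⟨K, hK, ?_⟩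
  calc eLpNorm ((Kᶜ ×ˢ univ).indicator f) p (μ.prod ν)
      = (∫⁻ a in Kᶜ, ∫⁻ b, F (a, b) ∂ν ∂μ) ^ (1 / p.toReal) := by
        rw [eLpNorm_indicator_eq_eLpNorm_restrict hKm,
          eLpNorm_eq_lintegral_rpow_enorm_toReal hp₀ hp, hF_restrict]
    _ < (ε ^ p.toReal) ^ (1 / p.toReal) := ENNReal.rpow_lt_rpow hKF (by positivity)
    _ = ε := by rw [← ENNReal.rpow_mul, mul_one_div_cancel hp'.ne', ENNReal.rpow_one]

theorem MemLp.exists_eLpNorm_sub_indicator_prod_lt {ι : Type*} [Nonempty ι] {U : ι → Set α}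
    (hUo : ∀ i, IsOpen (U i)) (hU : ⋃ i, U i = univ) (hUd : Directed (· ⊆ ·) U)
    (hp₀ : p ≠ 0) (hp : p ≠ ∞) (hf : MemLp f p (μ.prod ν)) {ε : ℝ≥0∞} (hε : ε ≠ 0) :
    ∃ i, eLpNorm (f - (U i ×ˢ univ).indicator f) p (μ.prod ν) < ε := by
  obtain ⟨K, hK, hKf⟩ := hf.exists_isCompact_eLpNorm_indicator_compl_prod_lt hp₀ hp hε
  obtain ⟨i, hi⟩ := hK.elim_directed_cover U hUo (hU ▸ subset_univ K) hUd
  have hsub : (U i ×ˢ univ : Set (α × β))ᶜ ⊆ Kᶜ ×ˢ univ := fun x hx =>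
    ⟨fun hxK => hx ⟨hi hxK, trivial⟩, trivial⟩
  refine ⟨i, lt_of_le_of_lt (eLpNorm_mono fun x => ?_) hKf⟩
  rw [← indicator_compl]
  exact norm_indicator_le_of_subset hsub f x

end MeasureTheory

namespace Submonoid

variable {G : Type*} [Group G] (S : Submonoid G)

theorem mul_mem_interior_s9 [TopologicalSpace G] [IsTopologicalGroup G] {s g : G} (hs : s ∈ S)
    (hg : g ∈ interior (S : Set G)) : s * g ∈ interior (S : Set G) :=
  interior_maximal (by rintro _ ⟨h, hh, rfl⟩; exact S.mul_mem hs (interior_subset hh))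
    (isOpen_interior.smul s) (smul_mem_smul_set hg)

variable {S}

theorem exists_mul_eq_mul (hSG : ∀ g : G, ∃ s ∈ S, ∃ t ∈ S, g = s⁻¹ * t) (d₁ d₂ : G) :
    ∃ s₁ ∈ S, ∃ s₂ ∈ S, s₁ * d₁ = s₂ * d₂ := by
  obtain ⟨s, hs, t, ht, hst⟩ := hSG (d₁ * d₂⁻¹)
  exact ⟨s, hs, t, ht, by rw [← mul_inv_eq_iff_eq_mul, mul_assoc, hst, mul_inv_cancel_left]⟩

variable [TopologicalSpace G] [IsTopologicalGroup G]

theorem exists_mul_inv_mem_interior (hSG : ∀ g : G, ∃ s ∈ S, ∃ t ∈ S, g = s⁻¹ * t)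
    (hint : (interior (S : Set G)).Nonempty) (a : G) :
    ∃ d ∈ S, d * a⁻¹ ∈ interior (S : Set G) := by
  obtain ⟨u, hu⟩ := hint
  obtain ⟨s, hs, t, ht, hst⟩ := hSG (u * a)
  refine ⟨t, ht, ?_⟩
  have hta : t * a⁻¹ = s * u := by rw [← mul_inv_cancel_left s t, ← hst]; group
  exact hta ▸ S.mul_mem_interior_s9 hs hu

theorem directed_mul_inv_mem_interior (hSG : ∀ g : G, ∃ s ∈ S, ∃ t ∈ S, g = s⁻¹ * t) :
    Directed (· ⊆ ·) fun d : S => {a : G | (d : G) * a⁻¹ ∈ interior (S : Set G)} := by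
  intro d₁ d₂
  obtain ⟨s₁, hs₁, s₂, hs₂, h⟩ := exists_mul_eq_mul hSG d₁ d₂
  refine ⟨⟨s₁ * d₁, S.mul_mem hs₁ d₁.2⟩, fun a ha => ?_, fun a ha => ?_⟩
  · simpa only [mem_ofPred_eq, mul_assoc] using S.mul_mem_interior_s9 hs₁ ha
  · simpa only [mem_ofPred_eq, h, mul_assoc] using S.mul_mem_interior_s9 hs₂ ha

end Submonoid

theorem dense_union_Hd_general
    {G : Type*} [Group G] [TopologicalSpace G] [IsTopologicalGroup G]
    [MeasurableSpace G] [BorelSpace G]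
    (μ : Measure G) [μ.Regular] [SFinite μ]
    (S : Submonoid G)
    (hSG : ∀ g : G, ∃ s ∈ S, ∃ t ∈ S, g = s⁻¹ * t)
    (hint : (interior (S : Set G)).Nonempty) :
    ∀ ξ : Lp ℂ 2 (μ.prod μ),
      (∀ᵐ x ∂(μ.prod μ), x ∉ (S : Set G) ×ˢ (S : Set G) → ξ x = 0) →
      ξ ∈ closure {η : Lp ℂ 2 (μ.prod μ) | ∃ d ∈ S,
        ∀ᵐ x ∂(μ.prod μ),
          x ∉ {y : G × G | y.1 ∈ S ∧ y.2 ∈ S ∧ d * y.1⁻¹ * y.2 ∈ S} → η x = 0} := by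
  intro ξ hξ
  refine Metric.mem_closure_iff.2 fun ε hε => ?_
  set V : S → Set G := fun d => {a | (d : G) * a⁻¹ ∈ interior (S : Set G)}
  have hVo (d : S) : IsOpen (V d) :=
    isOpen_interior.preimage (continuous_const.mul continuous_inv)
  have hV : ⋃ d, V d = univ := eq_univ_of_forall fun a =>
    let ⟨d, hd, hda⟩ := S.exists_mul_inv_mem_interior hSG hint a
    mem_iUnion.2 ⟨⟨d, hd⟩, hda⟩
  obtain ⟨⟨d, hd⟩, hξd⟩ := (Lp.memLp ξ).exists_eLpNorm_sub_indicator_prod_lt hVo hV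
    (Submonoid.directed_mul_inv_mem_interior hSG) two_ne_zero ENNReal.ofNat_ne_top
    (ENNReal.ofReal_pos.2 hε).ne'
  have hVm : MeasurableSet (V ⟨d, hd⟩ ×ˢ univ : Set (G × G)) :=
    (hVo _).measurableSet.prod .univ
  have hη := ((Lp.memLp ξ).indicator hVm).coeFn_toLp
  refine ⟨((Lp.memLp ξ).indicator hVm).toLp _, ⟨d, hd, ?_⟩, ?_⟩
  · filter_upwards [hξ, hη] with x hxS hx hxd
    rw [hx]
    by_cases hxV : x ∈ V ⟨d, hd⟩ ×ˢ univ
    · rw [indicator_of_mem hxV]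
      exact hxS fun hxSS => hxd ⟨hxSS.1, hxSS.2, S.mul_mem (interior_subset hxV.1) hxSS.2⟩
    · exact indicator_of_notMem hxV _
  · rw [← edist_lt_ofReal, Lp.edist_def]
    refine (eLpNorm_congr_ae (hη.mono fun x hx => ?_)).trans_lt hξd
    rw [Pi.sub_apply, Pi.sub_apply, hx]

/-- Let `G` be a locally compact group with left Haar measure `μ`, and
`S ⊆ G` a closed subsemigroup containing the identity with `S⁻¹S = G` and with
nonempty interior.  For `d ∈ S` let `S_d = {(a, b) ∈ S × S : da⁻¹b ∈ S}`.
Then the set of `ξ ∈ L²(G × G, μ ⊗ μ)` that vanish a.e. outside `S_d` for some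
`d ∈ S` is dense in the closed subspace of all `ξ ∈ L²(G × G, μ ⊗ μ)`
vanishing a.e. outside `S × S`. -/
theorem dense_union_Hd
    {G : Type*} [Group G] [TopologicalSpace G] [IsTopologicalGroup G]
    [LocallyCompactSpace G] [MeasurableSpace G] [BorelSpace G]
    (μ : Measure G) [μ.IsHaarMeasure] [μ.Regular] [SFinite μ]
    (S : Submonoid G) (hS : IsClosed (S : Set G))
    (hSG : ∀ g : G, ∃ s ∈ S, ∃ t ∈ S, g = s⁻¹ * t)
    (hint : (interior (S : Set G)).Nonempty) :
    ∀ ξ : Lp ℂ 2 (μ.prod μ),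
      (∀ᵐ x ∂(μ.prod μ), x ∉ (S : Set G) ×ˢ (S : Set G) → ξ x = 0) →
      ξ ∈ closure {η : Lp ℂ 2 (μ.prod μ) | ∃ d ∈ S,
        ∀ᵐ x ∂(μ.prod μ),
          x ∉ {y : G × G | y.1 ∈ S ∧ y.2 ∈ S ∧ d * y.1⁻¹ * y.2 ∈ S} → η x = 0} :=
  dense_union_Hd_general μ S hSG hint
end
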